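/- arXiv:math/0609277 — 4 statements merged into one kernel-verified Lean document; each statement's English description precedes it below -/
import Mathlib

section
/- Let a < r < b be real numbers and let G : [a,b] → ℝ be continuous on [a,b] and differentiable on (a,b) with derivative g := G′ concave on (a,b) and g(r) = 0. Then for every x ∈ [a,r], G(x) ≤ G(r) − ((r−x)²/(r−a)²)·(G(r) − G(a)), and consequently ∫_a^r G(x) dx ≤ (r−a)·((2/3)·G(r) + (1/3)·G(a)). -/
open MeasureTheory Set

/-! With `H y = G r - G y`: concavity of `g = G'` and `g r = 0` put `g` above its chord through
`(x, g x)` and `(r, 0)` on `[x, r]`, and integrating gives `g x * (r - x) ≤ 2 * H x`. This is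
exactly the sign condition making `H y / (r - y) ^ 2` nondecreasing on `[a, r)`; comparing its
values at `a` and `x` gives the quadratic bound, whose integral is computed explicitly. -/

theorem integral_quadratic_interpolation {a r : ℝ} (A B : ℝ) (har : a ≠ r) :
    ∫ x in a..r, (A - (r - x) ^ 2 / (r - a) ^ 2 * (A - B)) =
      (r - a) * ((2 / 3) * A + (1 / 3) * B) := by
  have hra : r - a ≠ 0 := sub_ne_zero.2 har.symm
  have hsq : ∫ x in a..r, (r - x) ^ 2 = (r - a) ^ 3 / 3 := by
    norm_num [intervalIntegral.integral_comp_sub_left (fun u => u ^ 2) r, integral_pow]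
  rw [intervalIntegral.integral_sub intervalIntegrable_const
      (Continuous.intervalIntegrable (by fun_prop) _ _),
    intervalIntegral.integral_mul_const, intervalIntegral.integral_div, hsq,
    intervalIntegral.integral_const, smul_eq_mul]
  field_simp
  ring

theorem mul_sub_div_two_le_sub_of_hasDerivAt {G g : ℝ → ℝ} {x r c : ℝ} (hxr : x < r)
    (hG : ContinuousOn G (Icc x r)) (hderiv : ∀ t ∈ Ioo x r, HasDerivAt G (g t) t)
    (hg : ∀ t ∈ Ioo x r, c * (r - t) ≤ (r - x) * g t) :
    c * (r - x) / 2 ≤ G r - G x := by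
  set L : ℝ → ℝ := fun t => (r - x) * G t + c * (r - t) ^ 2 / 2
  have hL : MonotoneOn L (Icc x r) := by
    refine monotoneOn_of_hasDerivWithinAt_nonneg (convex_Icc x r) (by fun_prop)
      (f' := fun t => (r - x) * g t - c * (r - t)) (fun t ht => ?_) (fun t ht => ?_)
    · rw [interior_Icc] at ht
      refine HasDerivAt.hasDerivWithinAt ?_
      refine (((hderiv t ht).const_mul (r - x)).add
        ((((hasDerivAt_id t).const_sub r).pow 2).const_mul c |>.div_const 2)).congr_deriv ?_
      simp only [id, Nat.cast_ofNat]
      ring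
    · rw [interior_Icc] at ht
      linarith [hg t ht]
  have := hL (left_mem_Icc.2 hxr.le) (right_mem_Icc.2 hxr.le) hxr.le
  simp only [L, sub_self] at this
  nlinarith

theorem monotoneOn_sub_div_sq_of_hasDerivAt {G g : ℝ → ℝ} {a r : ℝ}
    (hG : ContinuousOn G (Ico a r)) (hderiv : ∀ y ∈ Ioo a r, HasDerivAt G (g y) y)
    (hg : ∀ y ∈ Ioo a r, g y * (r - y) ≤ 2 * (G r - G y)) :
    MonotoneOn (fun y => (G r - G y) / (r - y) ^ 2) (Ico a r) := by
  refine monotoneOn_of_hasDerivWithinAt_nonneg (convex_Ico a r)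
    (continuousOn_const.sub hG |>.div (by fun_prop) fun y hy => by
      nlinarith [hy.2] : ContinuousOn _ _)
    (f' := fun y => (r - y) * (2 * (G r - G y) - g y * (r - y)) / ((r - y) ^ 2) ^ 2)
    (fun y hy => ?_) (fun y hy => ?_)
  · rw [interior_Ico] at hy
    have hry : r - y ≠ 0 := by linarith [hy.2]
    refine HasDerivAt.hasDerivWithinAt ?_
    refine (((hasDerivAt_const y (G r)).sub (hderiv y hy)).div
      (((hasDerivAt_id y).const_sub r).pow 2) (pow_ne_zero 2 hry)).congr_deriv ?_
    simp only [id, Nat.cast_ofNat, Pi.pow_apply, Pi.sub_apply]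
    field_simp
    ring
  · rw [interior_Ico] at hy
    have hry : 0 ≤ r - y := by linarith [hy.2]
    have := sub_nonneg.2 (hg y hy)
    positivity

theorem le_sub_sq_div_sq_mul_of_hasDerivAt {G g : ℝ → ℝ} {a r : ℝ} (har : a < r)
    (hG : ContinuousOn G (Icc a r)) (hderiv : ∀ y ∈ Ioo a r, HasDerivAt G (g y) y)
    (hg : ∀ y ∈ Ioo a r, g y * (r - y) ≤ 2 * (G r - G y)) {x : ℝ} (hx : x ∈ Icc a r) :
    G x ≤ G r - (r - x) ^ 2 / (r - a) ^ 2 * (G r - G a) := by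
  obtain hxr | rfl := hx.2.lt_or_eq
  · have hmono := monotoneOn_sub_div_sq_of_hasDerivAt (hG.mono Ico_subset_Icc_self) hderiv hg
      (left_mem_Ico.2 har) ⟨hx.1, hxr⟩ hx.1
    have hrx : 0 < r - x := by linarith
    have hra : 0 < r - a := by linarith
    rw [div_le_div_iff₀ (by positivity) (by positivity)] at hmono
    rw [div_mul_eq_mul_div, le_sub_comm, div_le_iff₀ (by positivity)]
    linarith
  · simp

/-- Intermediate estimate to the left of an interior minimizer: if `G` has a concave
derivative vanishing at `r`, then `G` is bounded above by a quadratic interpolation on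
`[a,r]`, and its integral over `[a,r]` is at most `(r-a)((2/3)G(r) + (1/3)G(a))`. -/
theorem concave_deriv_upper_bound_left
    (a r b : ℝ) (har : a < r) (hrb : r < b)
    (G g : ℝ → ℝ)
    (hGcont : ContinuousOn G (Icc a b))
    (hderiv : ∀ x ∈ Ioo a b, HasDerivAt G (g x) x)
    (hconc : ConcaveOn ℝ (Ioo a b) g)
    (hgr : g r = 0) :
    (∀ x ∈ Icc a r, G x ≤ G r - (r - x) ^ 2 / (r - a) ^ 2 * (G r - G a)) ∧
    ∫ x in a..r, G x ≤ (r - a) * ((2 / 3) * G r + (1 / 3) * G a) := by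
  have hGar : ContinuousOn G (Icc a r) := hGcont.mono (Icc_subset_Icc_right hrb.le)
  have hderiv_ar : ∀ y ∈ Ioo a r, HasDerivAt G (g y) y :=
    fun y hy => hderiv y ⟨hy.1, hy.2.trans hrb⟩
  have hchord : ∀ x ∈ Ioo a r, ∀ t ∈ Ioo x r, g x * (r - t) ≤ (r - x) * g t := by
    intro x hx t ht
    have := hconc.neg.secant_mono_aux1 ⟨hx.1, hx.2.trans hrb⟩ ⟨har, hrb⟩ ht.1 ht.2
    simp only [Pi.neg_apply, hgr, neg_zero, mul_zero, add_zero] at this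
    linarith
  have hslope : ∀ x ∈ Ioo a r, g x * (r - x) ≤ 2 * (G r - G x) := fun x hx => by
    have := mul_sub_div_two_le_sub_of_hasDerivAt hx.2
      (hGar.mono (Icc_subset_Icc_left hx.1.le))
      (fun t ht => hderiv_ar t ⟨hx.1.trans ht.1, ht.2⟩) (hchord x hx)
    linarith
  have hbound : ∀ x ∈ Icc a r, G x ≤ G r - (r - x) ^ 2 / (r - a) ^ 2 * (G r - G a) :=
    fun _ hx => le_sub_sq_div_sq_mul_of_hasDerivAt har hGar hderiv_ar hslope hx
  refine ⟨hbound, ?_⟩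
  calc ∫ x in a..r, G x ≤ ∫ x in a..r, (G r - (r - x) ^ 2 / (r - a) ^ 2 * (G r - G a)) :=
        intervalIntegral.integral_mono_on har.le
          (hGar.intervalIntegrable_of_Icc har.le)
          (Continuous.intervalIntegrable (by fun_prop) _ _) hbound
    _ = (r - a) * ((2 / 3) * G r + (1 / 3) * G a) :=
        integral_quadratic_interpolation _ _ har.ne
end

section
/- Let F, F̂ : [0,∞) → ℝ be continuous, let 𝔽 : [0,∞) → ℝ be bounded and measurable, and let 0 = t_0 < t_1 < … < t_m be real numbers. Assume: F is differentiable on (0,∞) with convex derivative; for each k ∈ {1, …, m}, F̂ is differentiable on (t_{k−1}, t_k) with derivative equal to the restriction of an affine function; F̂(t_k) = 𝔽(t_k) for k = 0, 1, …, m; F̂(x) = 𝔽(x) for all x ≥ t_m; for each k ∈ {0, 1, …, m−1} and every r ∈ (t_k, t_{k+1}], ∫_{t_k}^r 𝔽(x) dx ≤ ∫_{t_k}^r F̂(x) dx; and for each k ∈ {1, …, m} and every r ∈ [t_{k−1}, t_k), ∫_r^{t_k} 𝔽(x) dx ≥ ∫_r^{t_k} F̂(x) dx. Then sup_{x ∈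 [0,∞)} |F̂(x) − F(x)| ≤ 2·sup_{x ∈ [0,∞)} |𝔽(x) − F(x)|. -/
/-!
On a knot interval `[a, b]` the error `h = F̂ - F` has a concave derivative (affine minus convex),
satisfies `|h| ≤ ε` at both knots, and the integral conditions give `∫_r^b h ≤ ε (b - r)` and
`∫_a^r h ≥ -ε (r - a)`. At an interior maximum `p` of `h` we have `h'(p) = 0`, and concavity of `h'`
keeps `h` above the parabola with vertex `(p, h p)` through `(b, h b)`. Integrating over `[p, b]`
gives `(2 h(p) + h(b)) / 3 ≤ ε`, hence `h(p) ≤ 2ε`. The lower bound is the same argument applied to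
`x ↦ -h(-x)`, and beyond the last knot `F̂ = 𝔽`.
-/

open MeasureTheory Set intervalIntegral

theorem convexOn_mul_add {s : Set ℝ} (hs : Convex ℝ s) (α β : ℝ) :
    ConvexOn ℝ s (fun x => α * x + β) :=
  ((LinearMap.mulLeft ℝ α).convexOn hs).add_const β

theorem concaveOn_mul_add {s : Set ℝ} (hs : Convex ℝ s) (α β : ℝ) :
    ConcaveOn ℝ s (fun x => α * x + β) :=
  ((LinearMap.mulLeft ℝ α).concaveOn hs).add_const β

theorem nonneg_of_hasDerivAt_of_concaveOn {D ψ : ℝ → ℝ} {p b : ℝ}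
    (hD : ContinuousOn D (Icc p b)) (hderiv : ∀ z ∈ Ioo p b, HasDerivAt D (ψ z) z)
    (hψ : ConcaveOn ℝ (Ico p b) ψ) (hψp : ψ p = 0) (hDp : D p = 0) (hDb : D b = 0) :
    ∀ s ∈ Icc p b, 0 ≤ D s := by
  rintro s ⟨hps, hsb⟩
  by_contra! hs
  -- MVT on `[p, s]` and `[s, b]` gives `ψ ξ₁ < 0 < ψ ξ₂` with `p < ξ₁ < ξ₂`, but the slopes of the
  -- concave `ψ` from the zero `(p, 0)` decrease.
  have hps : p < s := hps.lt_of_ne (by rintro rfl; simp_all)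
  have hsb : s < b := hsb.lt_of_ne (by rintro rfl; simp_all)
  obtain ⟨ξ₁, hξ₁, hslope₁⟩ := exists_hasDerivAt_eq_slope D ψ hps
    (hD.mono (Icc_subset_Icc le_rfl hsb.le))
    (fun z hz => hderiv z ⟨hz.1, hz.2.trans hsb⟩)
  obtain ⟨ξ₂, hξ₂, hslope₂⟩ := exists_hasDerivAt_eq_slope D ψ hsb
    (hD.mono (Icc_subset_Icc hps.le le_rfl))
    (fun z hz => hderiv z ⟨hps.trans hz.1, hz.2⟩)
  have hneg : ψ ξ₁ < 0 := by
    rw [hslope₁, hDp]; exact div_neg_of_neg_of_pos (by linarith) (by linarith)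
  have hpos : 0 < ψ ξ₂ := by
    rw [hslope₂, hDb]; exact div_pos (by linarith) (by linarith)
  have hanti := hψ.slope_anti_adjacent ⟨le_rfl, hps.trans hsb⟩ ⟨(hps.trans hξ₂.1).le, hξ₂.2⟩
    hξ₁.1 (hξ₁.2.trans hξ₂.1)
  rw [hψp, sub_zero] at hanti
  have : 0 < (ψ ξ₂ - ψ ξ₁) / (ξ₂ - ξ₁) := div_pos (by linarith) (by linarith [hξ₁.2, hξ₂.1])
  have : ψ ξ₁ / (ξ₁ - p) < 0 := div_neg_of_neg_of_pos hneg (by linarith [hξ₁.1])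
  linarith

theorem add_mul_sq_le_of_hasDerivAt_of_concaveOn {h φ : ℝ → ℝ} {p b : ℝ} (hpb : p < b)
    (hh : ContinuousOn h (Icc p b)) (hderiv : ∀ z ∈ Ioo p b, HasDerivAt h (φ z) z)
    (hφ : ConcaveOn ℝ (Ico p b) φ) (hφp : φ p = 0) :
    ∀ s ∈ Icc p b, h p + (h b - h p) / (b - p) ^ 2 * (s - p) ^ 2 ≤ h s := by
  set c := (h b - h p) / (b - p) ^ 2
  have hquad (z : ℝ) :
      HasDerivAt (fun s => h p + c * (s - p) ^ 2) (2 * c * z + -(2 * c * p)) z := by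
    have := ((((hasDerivAt_id' z).sub_const p).fun_pow 2).const_mul c).const_add (h p)
    exact this.congr_deriv (by norm_num; ring)
  have hdiff : ∀ z ∈ Ioo p b, HasDerivAt (fun s => h s - (h p + c * (s - p) ^ 2))
      (φ z - (2 * c * z + -(2 * c * p))) z := fun z hz => (hderiv z hz).sub (hquad z)
  have hc : c * (b - p) ^ 2 = h b - h p := div_mul_cancel₀ _ (by positivity)
  have key := nonneg_of_hasDerivAt_of_concaveOn
    (D := fun s => h s - (h p + c * (s - p) ^ 2)) (hh.sub (by fun_prop)) hdiff
    (hφ.sub (convexOn_mul_add (convex_Ico p b) _ _)) (by simp [hφp]) (by simp) (by rw [hc]; ring)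
  intro s hs
  linarith [key s hs]

theorem le_integral_of_hasDerivAt_of_concaveOn {h φ : ℝ → ℝ} {p b : ℝ}
    (hpb : p < b) (hh : ContinuousOn h (Icc p b))
    (hderiv : ∀ z ∈ Ioo p b, HasDerivAt h (φ z) z) (hφ : ConcaveOn ℝ (Ico p b) φ)
    (hφp : φ p = 0) :
    (b - p) * (2 * h p + h b) ≤ 3 * ∫ s in p..b, h s := by
  set c := (h b - h p) / (b - p) ^ 2
  have hmono := integral_mono_on hpb.le
    (Continuous.intervalIntegrable (μ := volume) (by fun_prop) _ _)
    (hh.intervalIntegrable_of_Icc hpb.le)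
    (add_mul_sq_le_of_hasDerivAt_of_concaveOn hpb hh hderiv hφ hφp)
  have hquad : ∫ s in p..b, (h p + c * (s - p) ^ 2) = (b - p) * h p + c * (b - p) ^ 3 / 3 := by
    rw [integral_add intervalIntegrable_const (Continuous.intervalIntegrable (by fun_prop) _ _),
      intervalIntegral.integral_const_mul, integral_comp_sub_right (fun x => x ^ 2), integral_pow]
    rw [intervalIntegral.integral_const, smul_eq_mul]
    ring
  have hc : c * (b - p) ^ 2 = h b - h p := div_mul_cancel₀ _ (by positivity)
  rw [hquad] at hmono
  nlinarith

theorem le_two_mul_of_integral_le {h φ : ℝ → ℝ} {a b ε : ℝ} (hab : a < b)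
    (hh : ContinuousOn h (Icc a b)) (hderiv : ∀ z ∈ Ioo a b, HasDerivAt h (φ z) z)
    (hφ : ConcaveOn ℝ (Ioo a b) φ) (ha : |h a| ≤ ε) (hb : |h b| ≤ ε)
    (hint : ∀ r ∈ Ico a b, ∫ x in r..b, h x ≤ ε * (b - r)) :
    ∀ x ∈ Icc a b, h x ≤ 2 * ε := by
  intro x hx
  obtain ⟨p, hp, hmax⟩ := isCompact_Icc.exists_isMaxOn (nonempty_Icc.2 hab.le) hh
  have hxp : h x ≤ h p := hmax hx
  obtain ⟨hεb, hbε⟩ := abs_le.1 hb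
  suffices h p ≤ 2 * ε by linarith
  by_contra! hp2
  have hap : a < p := hp.1.lt_of_ne (by rintro rfl; linarith [le_abs_self (h a)])
  have hpb : p < b := hp.2.lt_of_ne (by rintro rfl; linarith)
  have hφp : φ p = 0 :=
    (hmax.isLocalMax (Icc_mem_nhds hap hpb)).hasDerivAt_eq_zero (hderiv p ⟨hap, hpb⟩)
  have hlower := le_integral_of_hasDerivAt_of_concaveOn hpb
    (hh.mono (Icc_subset_Icc hap.le le_rfl)) (fun z hz => hderiv z ⟨hap.trans hz.1, hz.2⟩)
    (hφ.subset (Ico_subset_Ioo_left hap) (convex_Ico p b)) hφp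
  have hupper := hint p ⟨hp.1, hpb⟩
  have : 2 * h p + h b ≤ 3 * ε := le_of_mul_le_mul_left (by linarith) (sub_pos.2 hpb)
  linarith

theorem neg_two_mul_le_of_le_integral {h φ : ℝ → ℝ} {a b ε : ℝ} (hab : a < b)
    (hh : ContinuousOn h (Icc a b)) (hderiv : ∀ z ∈ Ioo a b, HasDerivAt h (φ z) z)
    (hφ : ConcaveOn ℝ (Ioo a b) φ) (ha : |h a| ≤ ε) (hb : |h b| ≤ ε)
    (hint : ∀ r ∈ Ioc a b, -(ε * (r - a)) ≤ ∫ x in a..r, h x) :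
    ∀ x ∈ Icc a b, -(2 * ε) ≤ h x := by
  have hint_neg : ∀ r ∈ Ico (-b) (-a), ∫ x in r..-a, -h (-x) ≤ ε * (-a - r) := fun r hr => by
    rw [intervalIntegral.integral_neg, intervalIntegral.integral_comp_neg (fun x => h x), neg_neg]
    linarith [hint (-r) (neg_mem_Ioc_iff.2 hr)]
  have hreflect := le_two_mul_of_integral_le (h := fun s => -h (-s)) (φ := fun s => φ (-s))
    (neg_lt_neg hab) (hh.comp continuous_neg.continuousOn fun _ => neg_mem_Icc_iff.2).neg
    (fun z hz => ((hderiv (-z) (neg_mem_Ioo_iff.2 hz)).comp z (hasDerivAt_neg z)).neg.congr_deriv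
      (by ring))
    ((hφ.comp_linearMap (-LinearMap.id)).subset (fun _ => neg_mem_Ioo_iff.2) (convex_Ioo _ _))
    (by simpa using hb) (by simpa using ha) hint_neg
  intro x hx
  have := hreflect (-x) (by rwa [neg_mem_Icc_iff, neg_neg, neg_neg])
  simp only [neg_neg] at this
  linarith

theorem abs_sub_le_two_mul_of_piece {F Fhat E f g : ℝ → ℝ} {a b ε : ℝ} (hab : a < b)
    (hF : ContinuousOn F (Icc a b)) (hFhat : ContinuousOn Fhat (Icc a b))
    (hE : IntervalIntegrable E volume a b) (hEF : ∀ x ∈ Icc a b, |E x - F x| ≤ ε)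
    (hFderiv : ∀ x ∈ Ioo a b, HasDerivAt F (f x) x) (hf : ConvexOn ℝ (Ioo a b) f)
    (hFhatderiv : ∀ x ∈ Ioo a b, HasDerivAt Fhat (g x) x) (hg : ConcaveOn ℝ (Ioo a b) g)
    (ha : Fhat a = E a) (hb : Fhat b = E b)
    (hright : ∀ r ∈ Ico a b, ∫ x in r..b, Fhat x ≤ ∫ x in r..b, E x)
    (hleft : ∀ r ∈ Ioc a b, ∫ x in a..r, E x ≤ ∫ x in a..r, Fhat x) :
    ∀ x ∈ Icc a b, |Fhat x - F x| ≤ 2 * ε := by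
  have hclose {u v : ℝ} (hu : a ≤ u) (huv : u ≤ v) (hv : v ≤ b) :
      |(∫ x in u..v, (Fhat x - F x)) - ((∫ x in u..v, Fhat x) - ∫ x in u..v, E x)| ≤
        ε * (v - u) := by
    have hsub : Icc u v ⊆ Icc a b := Icc_subset_Icc hu hv
    have hF' := (hF.mono hsub).intervalIntegrable_of_Icc (μ := volume) huv
    have hE' : IntervalIntegrable E volume u v :=
      hE.mono_set (by rwa [uIcc_of_le huv, uIcc_of_le hab.le])
    rw [integral_sub ((hFhat.mono hsub).intervalIntegrable_of_Icc (μ := volume) huv) hF',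
      sub_sub_sub_cancel_left, ← integral_sub hE' hF', ← abs_of_nonneg (sub_nonneg.2 huv)]
    exact norm_integral_le_of_norm_le_const (f := fun x => E x - F x) fun x hx =>
      hEF x (hsub (Ioc_subset_Icc_self (uIoc_of_le huv ▸ hx)))
  have hderiv z (hz : z ∈ Ioo a b) : HasDerivAt (fun x => Fhat x - F x) (g z - f z) z :=
    (hFhatderiv z hz).sub (hFderiv z hz)
  have hha : |Fhat a - F a| ≤ ε := ha ▸ hEF a (left_mem_Icc.2 hab.le)
  have hhb : |Fhat b - F b| ≤ ε := hb ▸ hEF b (right_mem_Icc.2 hab.le)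
  intro x hx
  refine abs_le.2 ⟨neg_two_mul_le_of_le_integral (h := fun x => Fhat x - F x) hab
    (hFhat.sub hF) hderiv (hg.sub hf) hha hhb (fun r hr => ?_) x hx,
    le_two_mul_of_integral_le (h := fun x => Fhat x - F x) hab
    (hFhat.sub hF) hderiv (hg.sub hf) hha hhb (fun r hr => ?_) x hx⟩
  · linarith [hleft r hr, (abs_le.1 (hclose le_rfl hr.1.le hr.2)).1]
  · linarith [hright r hr, (abs_le.1 (hclose hr.1 hr.2.le le_rfl)).2]

theorem exists_lt_mem_Ico_of_le_of_lt {α : Type*} [LinearOrder α] {t : ℕ → α} {x : α}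
    (h0 : t 0 ≤ x) : ∀ {m : ℕ}, x < t m → ∃ k < m, x ∈ Ico (t k) (t (k + 1))
  | 0, hm => absurd h0 (not_le.2 hm)
  | m + 1, hm =>
    if hx : x < t m then
      let ⟨k, hk, hxk⟩ := exists_lt_mem_Ico_of_le_of_lt h0 hx
      ⟨k, hk.trans (Nat.lt_succ_self m), hxk⟩
    else ⟨m, Nat.lt_succ_self m, not_lt.1 hx, hm⟩

theorem bddAbove_image_abs_sub_of_eq {F G H : ℝ → ℝ} {T C : ℝ} (hF : ContinuousOn F (Icc 0 T))
    (hG : ∀ x ∈ Ici 0, |G x| ≤ C) (hHG : ∀ x, T ≤ x → H x = G x)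
    (hH : BddAbove ((fun x => |H x - F x|) '' Ici 0)) :
    BddAbove ((fun x => |G x - F x|) '' Ici 0) := by
  obtain ⟨K, hK⟩ := isCompact_Icc.exists_bound_of_continuousOn hF
  obtain ⟨M, hM⟩ := hH
  refine ⟨max M (C + K), forall_mem_image.2 fun x hx => ?_⟩
  rcases le_or_gt T x with hTx | hxT
  · rw [← hHG x hTx]
    exact (hM ⟨x, hx, rfl⟩).trans (le_max_left _ _)
  · calc |G x - F x| ≤ |G x| + |F x| := abs_sub _ _
      _ ≤ C + K := add_le_add (hG x hx) (hK x ⟨hx, hxT.le⟩)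
      _ ≤ max M (C + K) := le_max_right _ _

theorem intervalIntegrable_of_abs_le {E : ℝ → ℝ} {s : Set ℝ} {a b C : ℝ} (hab : a ≤ b)
    (hs : Icc a b ⊆ s) (hE : AEMeasurable E (volume.restrict s)) (hC : ∀ x ∈ s, |E x| ≤ C) :
    IntervalIntegrable E volume a b := by
  have hsub : Ioc a b ⊆ s := Ioc_subset_Icc_self.trans hs
  rw [intervalIntegrable_iff_integrableOn_Ioc_of_le hab]
  exact .of_bound measure_Ioc_lt_top
    (hE.mono_measure (Measure.restrict_mono hsub le_rfl)).aestronglyMeasurable C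
    ((ae_restrict_iff' measurableSet_Ioc).2 (ae_of_all _ fun x hx => hC x (hsub hx)))

/-- Theorem 1(2) in conditional form: `‖F̂ - F‖_∞ ≤ 2 ‖𝔽 - F‖_∞` on `[0,∞)`. -/
theorem glued_abs_bound
    (F Fhat EDF : ℝ → ℝ) (m : ℕ) (t : ℕ → ℝ)
    (ht0 : t 0 = 0) (htlt : ∀ k, k < m → t k < t (k + 1))
    (hFcont : ContinuousOn F (Ici 0))
    (hFhatcont : ContinuousOn Fhat (Ici 0))
    (hmeas : AEMeasurable EDF (volume.restrict (Ici 0)))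
    (hbdd : ∃ C : ℝ, ∀ x ∈ Ici (0 : ℝ), |EDF x| ≤ C)
    (hFconv : ∃ f : ℝ → ℝ, (∀ x ∈ Ioi (0 : ℝ), HasDerivAt F (f x) x) ∧ ConvexOn ℝ (Ioi 0) f)
    (hFhatlin : ∀ k, 1 ≤ k → k ≤ m → ∃ α β : ℝ,
      ∀ x ∈ Ioo (t (k - 1)) (t k), HasDerivAt Fhat (α * x + β) x)
    (hknots : ∀ k ≤ m, Fhat (t k) = EDF (t k))
    (htail : ∀ x, t m ≤ x → Fhat x = EDF x)
    (hintfwd : ∀ k, k < m → ∀ r ∈ Ioc (t k) (t (k + 1)),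
      ∫ x in (t k)..r, EDF x ≤ ∫ x in (t k)..r, Fhat x)
    (hintbwd : ∀ k, 1 ≤ k → k ≤ m → ∀ r ∈ Ico (t (k - 1)) (t k),
      ∫ x in r..(t k), Fhat x ≤ ∫ x in r..(t k), EDF x) :
    sSup ((fun x => |Fhat x - F x|) '' Ici 0) ≤
      2 * sSup ((fun x => |EDF x - F x|) '' Ici 0) := by
  obtain ⟨C, hC⟩ := hbdd
  obtain ⟨f, hFderiv, hf⟩ := hFconv
  have ht_nonneg : ∀ k ≤ m, 0 ≤ t k := fun k hk =>
    ht0 ▸ (strictMonoOn_Iic_of_lt_succ htlt).monotoneOn (Nat.zero_le m) hk (Nat.zero_le k)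
  by_cases hB : BddAbove ((fun x => |EDF x - F x|) '' Ici 0)
  swap
  -- Unbounded sets have `sSup = 0` in `ℝ`; the left one is unbounded too.
  · have hB' := mt (bddAbove_image_abs_sub_of_eq (hFcont.mono Icc_subset_Ici_self) hC htail) hB
    rw [Real.sSup_of_not_bddAbove hB, Real.sSup_of_not_bddAbove hB', mul_zero]
  set ε := sSup ((fun x => |EDF x - F x|) '' Ici 0)
  have hε : ∀ x ∈ Ici (0 : ℝ), |EDF x - F x| ≤ ε := fun x hx =>
    le_csSup hB (mem_image_of_mem _ hx)
  refine csSup_le (nonempty_Ici.image _) (forall_mem_image.2 fun x hx => ?_)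
  rcases le_or_gt (t m) x with hxm | hxm
  · rw [htail x hxm]
    linarith [hε x hx, abs_nonneg (EDF x - F x)]
  obtain ⟨k, hkm, hxk⟩ := exists_lt_mem_Ico_of_le_of_lt (ht0 ▸ hx) hxm
  have hIcc : Icc (t k) (t (k + 1)) ⊆ Ici 0 := fun z hz => (ht_nonneg k hkm.le).trans hz.1
  have hIoo : Ioo (t k) (t (k + 1)) ⊆ Ioi 0 := fun z hz => (ht_nonneg k hkm.le).trans_lt hz.1
  obtain ⟨α, β, hFhatderiv⟩ := hFhatlin (k + 1) (by omega) hkm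
  rw [Nat.add_sub_cancel] at hFhatderiv
  exact abs_sub_le_two_mul_of_piece (htlt k hkm) (hFcont.mono hIcc) (hFhatcont.mono hIcc)
    (intervalIntegrable_of_abs_le (htlt k hkm).le hIcc hmeas hC) (fun z hz => hε z (hIcc hz))
    (fun z hz => hFderiv z (hIoo hz)) (hf.subset hIoo (convex_Ioo _ _))
    hFhatderiv (concaveOn_mul_add (convex_Ioo _ _) α β) (hknots k hkm.le) (hknots (k + 1) hkm)
    (by simpa using hintbwd (k + 1) (by omega) hkm) (hintfwd k hkm) x ⟨hxk.1, hxk.2.le⟩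
end

section
/- Let n ≥ 1 and let x_1, …, x_n ∈ (0,∞) with empirical distribution function 𝔽(r) := (1/n)·#{i : x_i ≤ r}. Let 𝒦 denote the set of all functions h : [0,∞) → ℝ that are convex on [0,∞) and Lebesgue integrable over [0,∞). Suppose f̂ ∈ 𝒦 is square-integrable and minimizes Φ(h) := ∫_0^∞ h(x)² dx − (2/n)·∑_{i=1}^n h(x_i) over all square-integrable h ∈ 𝒦. Suppose moreover there are points 0 = t_0 < t_1 < … < t_m with t_m > max_i x_i such that f̂ is affine on each interval [t_{k−1}, t_k], f̂ = 0 on [t_m, ∞), and at each t_k (1 ≤ k ≤ m) the right derivative of f̂ is strictly larger than the left derivative. Let F̂(r) := ∫_0^r f̂(x) dx. Then 𝔽(t_k) = F̂(t_k) for k = 0, 1, …, m. -/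
/-!
Write `Y(p) = n⁻¹ ∑ᵢ (p - xᵢ)₊` and `H(p) = ∫₀^∞ f̂(y) (p - y)₊ dy`. Perturbing `f̂` to
`f̂ + ε (p - ·)₊` with `ε > 0` keeps it convex, so the first-order condition for the minimiser
gives `Y ≤ H` everywhere. At a knot `p` the perturbation `f̂ - ε (p - ·)₊` is still convex for
small `ε > 0`, because the two convex pieces it consists of share a supporting line at `p`
as long as `ε` is below the jump of the derivative; hence `H(p) = Y(p)`. Since `𝔽(p)` is a
subgradient of `Y` at `p`, the graph of `H` lies above the line through `(p, H p)` of slope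
`𝔽(p)`, and `H` is differentiable with `H' = F̂`. So `F̂(p) = 𝔽(p)`.
-/

open MeasureTheory Set Filter Topology

theorem convexOn_of_mul_le_add_mul {s : Set ℝ} {f : ℝ → ℝ} (hs : Convex ℝ s)
    (h : ∀ x ∈ s, ∀ z ∈ s, ∀ y, x < y → y < z → (z - x) * f y ≤ (z - y) * f x + (y - x) * f z) :
    ConvexOn ℝ s f :=
  convexOn_of_slope_mono_adjacent hs fun hx hz hxy hyz => by
    rw [div_le_div_iff₀ (sub_pos.2 hxy) (sub_pos.2 hyz)]
    linarith [h _ hx _ hz _ hxy hyz]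

theorem convexOn_of_convexOn_Iic_of_convexOn_Ici {s : Set ℝ} {g : ℝ → ℝ} {p c : ℝ}
    (hs : Convex ℝ s) (hL : ConvexOn ℝ (s ∩ Iic p) g) (hR : ConvexOn ℝ (s ∩ Ici p) g)
    (hline : ∀ y ∈ s, g p + c * (y - p) ≤ g y) : ConvexOn ℝ s g := by
  refine convexOn_of_mul_le_add_mul hs fun x hx z hz y hxy hyz => ?_
  rcases le_or_gt z p with hzp | hpz
  · exact hL.secant_mono_aux1 ⟨hx, (hxy.trans hyz).le.trans hzp⟩ ⟨hz, hzp⟩ hxy hyz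
  rcases le_or_gt p x with hpx | hxp
  · exact hR.secant_mono_aux1 ⟨hx, hpx⟩ ⟨hz, hpx.trans (hxy.trans hyz).le⟩ hxy hyz
  -- the chord over `[x, z]` lies above the supporting line, hence above `g p`
  have hchord : (z - x) * g p ≤ (z - p) * g x + (p - x) * g z := by
    nlinarith [hline x hx, hline z hz]
  have hpS : p ∈ s := hs.ordConnected.out hx hz ⟨hxp.le, hpz.le⟩
  rcases lt_trichotomy y p with hyp | rfl | hpy
  · have hleft := hL.secant_mono_aux1 ⟨hx, hxp.le⟩ ⟨hpS, mem_Iic.2 le_rfl⟩ hxy hyp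
    have key : (p - x) * ((z - x) * g y) ≤ (p - x) * ((z - y) * g x + (y - x) * g z) := by
      nlinarith [mul_le_mul_of_nonneg_left hleft (sub_pos.2 (hxy.trans hyz)).le,
        mul_le_mul_of_nonneg_left hchord (sub_pos.2 hxy).le]
    exact le_of_mul_le_mul_left key (sub_pos.2 hxp)
  · exact hchord
  · have hright := hR.secant_mono_aux1 ⟨hpS, mem_Ici.2 le_rfl⟩ ⟨hz, hpz.le⟩ hpy hyz
    have key : (z - p) * ((z - x) * g y) ≤ (z - p) * ((z - y) * g x + (y - x) * g z) := by
      nlinarith [mul_le_mul_of_nonneg_left hright (sub_pos.2 (hxy.trans hyz)).le,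
        mul_le_mul_of_nonneg_left hchord (sub_pos.2 hyz).le]
    exact le_of_mul_le_mul_left key (sub_pos.2 hpz)

namespace ConvexOn

variable {S : Set ℝ} {f : ℝ → ℝ} {p y : ℝ}

theorem slope_le_derivWithin_Iic (hf : ConvexOn ℝ S f) (hp : p ∈ interior S) (hy : y ∈ S)
    (hyp : y < p) : slope f y p ≤ derivWithin f (Iic p) p := by
  rw [(hf.hasDerivWithinAt_leftDeriv_of_mem_interior hp).Iic_of_Iio.derivWithin
    (uniqueDiffWithinAt_Iic p)]
  exact hf.slope_le_leftDeriv_of_mem_interior hy hp hyp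

theorem derivWithin_Ici_le_slope (hf : ConvexOn ℝ S f) (hp : p ∈ interior S) (hy : y ∈ S)
    (hpy : p < y) : derivWithin f (Ici p) p ≤ slope f p y := by
  rw [← derivWithin_Ioi_eq_Ici]
  exact hf.rightDeriv_le_slope_of_mem_interior hp hy hpy

theorem add_mul_max_sub (hf : ConvexOn ℝ S f) (hp : p ∈ interior S) {ε : ℝ}
    (hε : derivWithin f (Iic p) p - derivWithin f (Ici p) p ≤ ε) :
    ConvexOn ℝ S fun y => f y + ε * max (p - y) 0 := by
  have hS : Convex ℝ S := hf.1
  refine convexOn_of_convexOn_Iic_of_convexOn_Ici hS (p := p) (c := derivWithin f (Ici p) p)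
    ?_ ?_ ?_
  · have hSL := hS.inter (convex_Iic p)
    refine ((hf.subset inter_subset_left hSL).add
      ((((-ε) • LinearMap.id : ℝ →ₗ[ℝ] ℝ).convexOn hSL).add_const (ε * p))).congr fun y hy => ?_
    simp only [LinearMap.coe_smul, LinearMap.id_coe, neg_smul, Pi.add_apply, Pi.neg_apply,
      Pi.smul_apply, id_eq, smul_eq_mul, max_eq_left (sub_nonneg.2 (mem_Iic.1 hy.2))]
    ring
  · refine (hf.subset inter_subset_left (hS.inter (convex_Ici p))).congr fun y hy => ?_
    simp [max_eq_right (sub_nonpos.2 (mem_Ici.1 hy.2))]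
  · intro y hy
    rcases lt_trichotomy y p with hyp | rfl | hpy
    · have h := hf.slope_le_derivWithin_Iic hp hy hyp
      rw [slope_def_field, div_le_iff₀ (sub_pos.2 hyp)] at h
      simp only [max_eq_left (sub_nonneg.2 hyp.le), sub_self, max_self]
      nlinarith
    · simp
    · have h := hf.derivWithin_Ici_le_slope hp hy hpy
      rw [slope_def_field, le_div_iff₀ (sub_pos.2 hpy)] at h
      simp only [max_eq_right (sub_nonpos.2 hpy.le), sub_self, max_self]
      linarith

end ConvexOn

theorem MeasureTheory.IntegrableOn.mul_max_sub_Ici {f : ℝ → ℝ} {a p : ℝ}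
    (hf : IntegrableOn f (Icc a p)) : IntegrableOn (fun y => f y * max (p - y) 0) (Ici a) := by
  refine (hf.mul_continuousOn (by fun_prop) isCompact_Icc).of_forall_sdiff_eq_zero
    measurableSet_Ici fun y hy => ?_
  have hpy : p < y := not_le.1 fun h => hy.2 ⟨hy.1, h⟩
  simp [max_eq_right (sub_nonpos.2 hpy.le)]

theorem integrableOn_max_sub_Ici (a p : ℝ) : IntegrableOn (fun y => max (p - y) 0) (Ici a) := by
  simpa using (integrableOn_const (C := (1 : ℝ)) (s := Icc a p)
    measure_Icc_lt_top.ne).mul_max_sub_Ici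

theorem integrableOn_max_sub_sq_Ici (a p : ℝ) :
    IntegrableOn (fun y => max (p - y) 0 ^ 2) (Ici a) := by
  simpa [sq] using (((continuous_const.sub continuous_id).max continuous_const).integrableOn_Icc
    (a := a) (b := p)).mul_max_sub_Ici

theorem hasDerivAt_integral_mul_max_sub {f : ℝ → ℝ} {a p : ℝ} (hf : IntegrableOn f (Ici a))
    (hap : a ≤ p) :
    HasDerivAt (fun s => ∫ y in Ici a, f y * max (s - y) 0) (∫ y in a..p, f y) p := by
  have hint : ∀ s, IntegrableOn (fun y => f y * max (s - y) 0) (Ici a) := fun s =>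
    (hf.mono_set Icc_subset_Ici_self).mul_max_sub_Ici
  have hlip : ∀ y, LipschitzWith (Real.nnabs (f y)) fun s => f y * max (s - y) 0 := fun y =>
    LipschitzWith.of_dist_le_mul fun s s' => by
      rw [Real.dist_eq, Real.dist_eq, ← mul_sub, abs_mul, Real.coe_nnabs]
      refine mul_le_mul_of_nonneg_left ?_ (abs_nonneg _)
      exact (abs_max_sub_max_le_abs (s - y) (s' - y) 0).trans_eq (by rw [sub_sub_sub_cancel_right])
  have hderiv : ∀ y ≠ p, HasDerivAt (fun s => f y * max (s - y) 0) ((Iio p).indicator f y) p := by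
    intro y hyp
    rcases hyp.lt_or_gt with hyp | hpy
    · rw [indicator_of_mem (mem_Iio.2 hyp)]
      refine (((hasDerivAt_id p).sub_const y).const_mul (f y)).congr_deriv (mul_one _)
        |>.congr_of_eventuallyEq ?_
      filter_upwards [eventually_gt_nhds hyp] with s hs
      simp [max_eq_left (sub_nonneg.2 hs.le)]
    · rw [indicator_of_notMem (notMem_Iio.2 hpy.le)]
      refine (hasDerivAt_const p 0).congr_of_eventuallyEq ?_
      filter_upwards [eventually_lt_nhds hpy] with s hs
      simp [max_eq_right (sub_nonpos.2 hs.le)]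
  obtain ⟨-, h⟩ := hasDerivAt_integral_of_dominated_loc_of_lip (μ := volume.restrict (Ici a))
    (F := fun s y => f y * max (s - y) 0) (F' := (Iio p).indicator f) (bound := f)
    univ_mem (Eventually.of_forall fun s => (hint s).aestronglyMeasurable) (hint p)
    (hf.indicator measurableSet_Iio).aestronglyMeasurable
    (ae_of_all _ fun y => (hlip y).lipschitzOnWith) hf
    (ae_restrict_of_ae ((volume.ae_ne p).mono hderiv))
  refine h.congr_deriv ?_
  rw [integral_indicator measurableSet_Iio, Measure.restrict_restrict measurableSet_Iio,
    Iio_inter_Ici, intervalIntegral.integral_of_le hap, integral_Ioc_eq_integral_Ioo,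
    integral_Ico_eq_integral_Ioo]

theorem HasDerivAt.eq_of_forall_add_mul_sub_le {g : ℝ → ℝ} {g' c p : ℝ} (hg : HasDerivAt g g' p)
    (h : ∀ s, g p + c * (s - p) ≤ g s) : g' = c := by
  have hmin : IsLocalMin (fun s => g s - c * s) p :=
    Eventually.of_forall fun s => by linarith [h s]
  have := hmin.hasDerivAt_eq_zero (hg.sub ((hasDerivAt_id p).const_mul c))
  linarith

theorem nonneg_of_forall_mul_add_sq_mul_nonneg {a b δ : ℝ} (hδ : 0 < δ)
    (h : ∀ ε ∈ Ioo 0 δ, 0 ≤ ε * a + ε ^ 2 * b) : 0 ≤ a := by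
  have hlim : Tendsto (fun ε => a + ε * b) (𝓝[>] 0) (𝓝 a) := by
    have hc : Continuous fun ε : ℝ => a + ε * b := by fun_prop
    exact (hc.tendsto' 0 a (by simp)).mono_left nhdsWithin_le_nhds
  refine ge_of_tendsto hlim ?_
  filter_upwards [Ioo_mem_nhdsGT hδ] with ε hε
  exact nonneg_of_mul_nonneg_right (by linear_combination h ε hε) hε.1

section LeastSquares

variable {n : ℕ}

noncomputable def lsCriterion (x : Fin n → ℝ) (h : ℝ → ℝ) : ℝ :=
  (∫ y in Ici (0 : ℝ), h y ^ 2) - (2 / n) * ∑ i, h (x i)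

def MinimizesLSCriterion (x : Fin n → ℝ) (f : ℝ → ℝ) : Prop :=
  ∀ h : ℝ → ℝ, ConvexOn ℝ (Ici 0) h → IntegrableOn h (Ici 0) →
    IntegrableOn (fun y => h y ^ 2) (Ici 0) → lsCriterion x f ≤ lsCriterion x h

/-- The paper's `Y_n(p) = ∫₀ᵖ 𝔽` and `H_n(p) = ∫₀ᵖ F̂`, written (by Fubini) as integrals of
`(p - ·)₊` against the empirical measure and against `F̂`. -/
noncomputable def integratedEDF (x : Fin n → ℝ) (p : ℝ) : ℝ :=
  (n : ℝ)⁻¹ * ∑ i, max (p - x i) 0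

noncomputable def integratedCDF (f : ℝ → ℝ) (p : ℝ) : ℝ :=
  ∫ y in Ici 0, f y * max (p - y) 0

theorem integratedEDF_add_mul_le (x : Fin n → ℝ) (p s : ℝ) :
    integratedEDF x p + (n : ℝ)⁻¹ * (Finset.univ.filter fun i => x i ≤ p).card * (s - p) ≤
      integratedEDF x s := by
  have hpt : ∀ i, max (p - x i) 0 + (if x i ≤ p then s - p else 0) ≤ max (s - x i) 0 := by
    intro i
    split_ifs with hxp
    · rw [max_eq_left (sub_nonneg.2 hxp)]
      linarith [le_max_left (s - x i) 0]
    · rw [max_eq_right (by linarith [not_le.1 hxp]), add_zero]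
      exact le_max_right _ _
  have hsum := Finset.sum_le_sum fun i (_ : i ∈ Finset.univ) => hpt i
  rw [Finset.sum_add_distrib, ← Finset.sum_filter, Finset.sum_const, nsmul_eq_mul] at hsum
  calc _ = (n : ℝ)⁻¹ * (∑ i, max (p - x i) 0 +
        (Finset.univ.filter fun i => x i ≤ p).card * (s - p)) := by
        rw [integratedEDF]; ring
    _ ≤ integratedEDF x s := mul_le_mul_of_nonneg_left hsum (by positivity)

variable {x : Fin n → ℝ} {f : ℝ → ℝ}

theorem lsCriterion_add_mul_max_sub (hf : IntegrableOn f (Ici 0))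
    (hf2 : IntegrableOn (fun y => f y ^ 2) (Ici 0)) (p t : ℝ) :
    lsCriterion x (fun y => f y + t * max (p - y) 0) = lsCriterion x f +
      2 * t * (integratedCDF f p - integratedEDF x p) +
        t ^ 2 * ∫ y in Ici (0 : ℝ), max (p - y) 0 ^ 2 := by
  have hfΔ := (hf.mono_set (Icc_subset_Ici_self : Icc 0 p ⊆ Ici 0)).mul_max_sub_Ici
  have hΔ2 := integrableOn_max_sub_sq_Ici 0 p
  have hsq : (fun y => (f y + t * max (p - y) 0) ^ 2) =
      fun y => f y ^ 2 + (2 * t * (f y * max (p - y) 0) + t ^ 2 * max (p - y) 0 ^ 2) := by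
    funext y; ring
  rw [lsCriterion, lsCriterion, hsq, integral_add hf2 (g := fun y =>
      2 * t * (f y * max (p - y) 0) + t ^ 2 * max (p - y) 0 ^ 2)
      ((hfΔ.const_mul _).add (hΔ2.const_mul _)),
    integral_add (hfΔ.const_mul _) (hΔ2.const_mul _), integral_const_mul, integral_const_mul,
    Finset.sum_add_distrib, ← Finset.mul_sum, integratedCDF, integratedEDF]
  ring

theorem integrableOn_sq_add_mul_max_sub (hf : IntegrableOn f (Ici 0))
    (hf2 : IntegrableOn (fun y => f y ^ 2) (Ici 0)) (p t : ℝ) :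
    IntegrableOn (fun y => (f y + t * max (p - y) 0) ^ 2) (Ici 0) := by
  have hfΔ := (hf.mono_set (Icc_subset_Ici_self : Icc 0 p ⊆ Ici 0)).mul_max_sub_Ici
  refine (hf2.add (((hfΔ.const_mul (2 * t)).add
    ((integrableOn_max_sub_sq_Ici 0 p).const_mul (t ^ 2))))).congr_fun (fun y _ => ?_)
    measurableSet_Ici
  simp only [Pi.add_apply]
  ring

theorem MinimizesLSCriterion.nonneg_mul_integratedCDF_sub (hmin : MinimizesLSCriterion x f)
    (hf : IntegrableOn f (Ici 0)) (hf2 : IntegrableOn (fun y => f y ^ 2) (Ici 0)) {p σ δ : ℝ}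
    (hδ : 0 < δ)
    (hconv : ∀ ε ∈ Ioo 0 δ, ConvexOn ℝ (Ici 0) fun y => f y + ε * σ * max (p - y) 0) :
    0 ≤ σ * (integratedCDF f p - integratedEDF x p) := by
  suffices 0 ≤ 2 * (σ * (integratedCDF f p - integratedEDF x p)) by linarith
  refine nonneg_of_forall_mul_add_sq_mul_nonneg hδ
    (b := σ ^ 2 * ∫ y in Ici (0 : ℝ), max (p - y) 0 ^ 2) fun ε hε => ?_
  have h := hmin _ (hconv ε hε) (hf.add ((integrableOn_max_sub_Ici 0 p).const_mul (ε * σ)))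
    (integrableOn_sq_add_mul_max_sub hf hf2 p (ε * σ))
  rw [lsCriterion_add_mul_max_sub hf hf2] at h
  linear_combination h

theorem MinimizesLSCriterion.integratedEDF_le_integratedCDF (hmin : MinimizesLSCriterion x f)
    (hfc : ConvexOn ℝ (Ici 0) f) (hf : IntegrableOn f (Ici 0))
    (hf2 : IntegrableOn (fun y => f y ^ 2) (Ici 0)) (p : ℝ) :
    integratedEDF x p ≤ integratedCDF f p := by
  have hΔ : ConvexOn ℝ (Ici 0) fun y => max (p - y) 0 :=
    ((convexOn_const p (convex_Ici 0)).sub (concaveOn_id (convex_Ici 0))).sup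
      (convexOn_const 0 (convex_Ici 0))
  have := hmin.nonneg_mul_integratedCDF_sub hf hf2 (p := p) (σ := 1) one_pos fun ε hε =>
    (hfc.add (hΔ.smul hε.1.le)).congr fun y _ => by simp
  linarith

theorem MinimizesLSCriterion.integral_eq_of_derivWithin_lt (hmin : MinimizesLSCriterion x f)
    (hfc : ConvexOn ℝ (Ici 0) f) (hf : IntegrableOn f (Ici 0))
    (hf2 : IntegrableOn (fun y => f y ^ 2) (Ici 0)) {p : ℝ} (hp : 0 < p)
    (hkink : derivWithin f (Iic p) p < derivWithin f (Ici p) p) :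
    ∫ y in (0 : ℝ)..p, f y = (n : ℝ)⁻¹ * (Finset.univ.filter fun i => x i ≤ p).card := by
  have hpint : p ∈ interior (Ici 0) := by rwa [interior_Ici]
  have hle : integratedCDF f p ≤ integratedEDF x p := by
    have := hmin.nonneg_mul_integratedCDF_sub hf hf2 (σ := -1) (sub_pos.2 hkink) fun ε hε =>
      hfc.add_mul_max_sub hpint (by linarith [hε.2])
    linarith
  have hderiv : HasDerivAt (integratedCDF f) (∫ y in (0 : ℝ)..p, f y) p :=
    hasDerivAt_integral_mul_max_sub hf hp.le
  refine hderiv.eq_of_forall_add_mul_sub_le fun s => ?_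
  linarith [integratedEDF_add_mul_le x p s, hmin.integratedEDF_le_integratedCDF hfc hf hf2 s]

end LeastSquares

theorem lse_equals_edf_at_knots_general
    (n : ℕ) (x : Fin n → ℝ) (hx : ∀ i, 0 < x i)
    (EDF : ℝ → ℝ)
    (hEDF : ∀ r : ℝ, EDF r = (n : ℝ)⁻¹ * (Finset.univ.filter fun i => x i ≤ r).card)
    (fhat : ℝ → ℝ)
    (hfconv : ConvexOn ℝ (Ici 0) fhat) (hfint : IntegrableOn fhat (Ici 0))
    (hfsq : IntegrableOn (fun y => fhat y ^ 2) (Ici 0))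
    (hopt : ∀ h : ℝ → ℝ, ConvexOn ℝ (Ici 0) h → IntegrableOn h (Ici 0) →
      IntegrableOn (fun y => h y ^ 2) (Ici 0) →
      (∫ y in Ici (0 : ℝ), fhat y ^ 2) - (2 / n) * ∑ i, fhat (x i) ≤
        (∫ y in Ici (0 : ℝ), h y ^ 2) - (2 / n) * ∑ i, h (x i))
    (m : ℕ) (t : ℕ → ℝ)
    (ht0 : t 0 = 0) (htlt : ∀ k, k < m → t k < t (k + 1))
    (hkink : ∀ k, 1 ≤ k → k ≤ m →
      derivWithin fhat (Iic (t k)) (t k) < derivWithin fhat (Ici (t k)) (t k)) :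
    ∀ k ≤ m, EDF (t k) = ∫ u in (0 : ℝ)..(t k), fhat u := by
  intro k hk
  rw [hEDF]
  rcases Nat.eq_zero_or_pos k with rfl | hk0
  · rw [ht0, intervalIntegral.integral_same,
      Finset.filter_false_of_mem fun i _ => not_le.2 (hx i)]
    simp
  have hpos : 0 < t k :=
    ht0 ▸ strictMonoOn_Iic_of_lt_succ htlt (mem_Iic.2 m.zero_le) (mem_Iic.2 hk) hk0
  have hmin : MinimizesLSCriterion x fhat := hopt
  exact (hmin.integral_eq_of_derivWithin_lt hfconv hfint hfsq hpos (hkink k hk0 hk)).symm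

/-- Equation (8) for the least squares estimator: the estimated distribution function
agrees with the empirical distribution function at every knot of the piecewise linear
estimated density. -/
theorem lse_equals_edf_at_knots
    (n : ℕ) (hn : 1 ≤ n) (x : Fin n → ℝ) (hx : ∀ i, 0 < x i)
    (EDF : ℝ → ℝ)
    (hEDF : ∀ r : ℝ, EDF r = (n : ℝ)⁻¹ * (Finset.univ.filter fun i => x i ≤ r).card)
    (fhat : ℝ → ℝ)
    (hfconv : ConvexOn ℝ (Ici 0) fhat) (hfint : IntegrableOn fhat (Ici 0))
    (hfsq : IntegrableOn (fun y => fhat y ^ 2) (Ici 0))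
    (hopt : ∀ h : ℝ → ℝ, ConvexOn ℝ (Ici 0) h → IntegrableOn h (Ici 0) →
      IntegrableOn (fun y => h y ^ 2) (Ici 0) →
      (∫ y in Ici (0 : ℝ), fhat y ^ 2) - (2 / n) * ∑ i, fhat (x i) ≤
        (∫ y in Ici (0 : ℝ), h y ^ 2) - (2 / n) * ∑ i, h (x i))
    (m : ℕ) (t : ℕ → ℝ)
    (ht0 : t 0 = 0) (htlt : ∀ k, k < m → t k < t (k + 1))
    (htmax : ∀ i, x i < t m)
    (haff : ∀ k, 1 ≤ k → k ≤ m → ∃ α β : ℝ,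
      ∀ y ∈ Icc (t (k - 1)) (t k), fhat y = α * y + β)
    (htail : ∀ y, t m ≤ y → fhat y = 0)
    (hkink : ∀ k, 1 ≤ k → k ≤ m →
      derivWithin fhat (Iic (t k)) (t k) < derivWithin fhat (Ici (t k)) (t k)) :
    ∀ k ≤ m, EDF (t k) = ∫ u in (0 : ℝ)..(t k), fhat u :=
  lse_equals_edf_at_knots_general n x hx EDF hEDF fhat hfconv hfint hfsq hopt m t ht0 htlt hkink
end

section
/- Let n ≥ 1 and let x_1, …, x_n ∈ (0,∞) with empirical distribution function 𝔽(r) := (1/n)·#{i : x_i ≤ r}. Let 𝒦 denote the set of all functions h : [0,∞) → ℝ that are convex on [0,∞) and Lebesgue integrable over [0,∞). Suppose f̂ ∈ 𝒦 is square-integrable and minimizes Φ(h) := ∫_0^∞ h(x)² dx − (2/n)·∑_{i=1}^n h(x_i) over all square-integrable h ∈ 𝒦, and that there are points 0 = t_0 < t_1 < … < t_m with t_m > max_i x_i such that f̂ is affine on each interval [t_{k−1}, t_k], f̂ = 0 on [t_m, ∞), and at each t_k (1 ≤ k ≤ m) the right derivative of f̂ is strictly larger than the left derivative. Let F̂(r)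 := ∫_0^r f̂(x) dx. Then for every k ∈ {0, 1, …, m−1} and every r ∈ (t_k, t_{k+1}], ∫_{t_k}^r 𝔽(x) dx ≤ ∫_{t_k}^r F̂(x) dx. -/
open MeasureTheory Set Filter Topology

/-!
Perturb `f̂` along the tent `Δ(u) = (r - max t_k u)⁺`. Its only concave kink is at `t_k`, where
`f̂` has a strict convex kink (or which is the boundary point `0`), so `f̂ + ε Δ` is still convex
for small `ε > 0`, and the first-order condition for the minimiser gives
`(1/n) ∑ Δ(x_i) ≤ ∫ Δ f̂`. Since `Δ(c) = ∫_{t_k}^r 1[c ≤ u] du`, Fubini turns the two sides into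
the two integrals of the claim.
-/

/-- `tent a r c` is the Lebesgue measure of `[a, r] ∩ [c, ∞)`. -/
noncomputable def tent (a r c : ℝ) : ℝ := max (r - max a c) 0

lemma continuous_tent (a r : ℝ) : Continuous (tent a r) := by
  unfold tent; fun_prop

lemma tent_of_le {a r u : ℝ} (hru : r ≤ u) : tent a r u = 0 :=
  max_eq_right (by linarith [le_max_right a u])

lemma norm_tent_le (a r u : ℝ) : ‖tent a r u‖ ≤ max (r - a) 0 := by
  unfold tent
  rw [Real.norm_of_nonneg (le_max_right _ _)]
  exact max_le_max_right 0 (by linarith [le_max_left a u])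

lemma tent_eq_sub {a r : ℝ} (har : a ≤ r) (u : ℝ) :
    tent a r u = max (r - u) 0 - max (a - u) 0 := by
  unfold tent
  rcases le_total a u with hau | hua
  · rw [max_eq_right hau, max_eq_right (sub_nonpos.2 hau), sub_zero]
  · rw [max_eq_left hua, max_eq_left (sub_nonneg.2 har), max_eq_left (by linarith),
      max_eq_left (sub_nonneg.2 hua)]
    ring

lemma integrableOn_tent_Ici (a r c : ℝ) : IntegrableOn (tent a r) (Ici c) :=
  (continuous_tent a r).integrableOn_Icc.of_forall_sdiff_eq_zero measurableSet_Ici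
    fun _ hu => tent_of_le (not_le.1 fun h => hu.2 ⟨hu.1, h⟩).le

lemma integrableOn_tent_mul {f : ℝ → ℝ} {s : Set ℝ} (a r : ℝ) (hf : IntegrableOn f s) :
    IntegrableOn (fun y => tent a r y * f y) s :=
  hf.bdd_mul (continuous_tent a r).aestronglyMeasurable (ae_of_all _ (norm_tent_le a r))

lemma volume_real_Ici_inter_Ioc (a r c : ℝ) : volume.real (Ici c ∩ Ioc a r) = tent a r c := by
  rw [measureReal_congr (Ioi_ae_eq_Ici.symm.inter (ae_eq_refl (Ioc a r))), inter_comm,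
    Ioc_inter_Ioi, Real.volume_real_Ioc]
  rfl

lemma integral_indicator_Ici_const {a r : ℝ} (har : a ≤ r) (c e : ℝ) :
    ∫ u in a..r, (Ici c).indicator (fun _ => e) u = tent a r c * e := by
  rw [intervalIntegral.integral_of_le har, integral_indicator_const e measurableSet_Ici,
    measureReal_restrict_apply measurableSet_Ici, volume_real_Ici_inter_Ioc, smul_eq_mul]

lemma integral_card_filter_le {ι : Type*} [Fintype ι] (x : ι → ℝ) {a r : ℝ}
    (har : a ≤ r) :
    ∫ u in a..r, ((Finset.univ.filter fun i => x i ≤ u).card : ℝ) =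
      ∑ i, tent a r (x i) := by
  have hcard : ∀ u, ((Finset.univ.filter fun i => x i ≤ u).card : ℝ) =
      ∑ i, (Ici (x i)).indicator (fun _ => (1 : ℝ)) u := by
    simp only [indicator_apply, mem_Ici, Finset.sum_boole, implies_true]
  simp_rw [hcard]
  rw [intervalIntegral.integral_finsetSum fun i _ =>
    intervalIntegrable_iff.2 ((integrableOn_const (by simp)).indicator measurableSet_Ici)]
  simp [integral_indicator_Ici_const har]

lemma integral_primitive_eq_setIntegral_tent_mul {f : ℝ → ℝ} {b a r : ℝ} (hba : b ≤ a)
    (har : a ≤ r) (hf : IntegrableOn f (Ioc b r)) :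
    ∫ u in a..r, ∫ v in b..u, f v = ∫ v in Ioc b r, tent a r v * f v := by
  have inner : EqOn (fun u => ∫ v in b..u, f v)
      (fun u => ∫ v in Ioc b r, (Ici v).indicator (fun _ => f v) u) (Ioc a r) := by
    intro u hu
    have hind : ∀ v, (Ici v).indicator (fun _ => f v) u = (Iic u).indicator f v := by
      intro v; simp [indicator_apply]
    simp only [hind]
    rw [intervalIntegral.integral_of_le (hba.trans hu.1.le),
      setIntegral_indicator measurableSet_Iic, Ioc_inter_Iic, min_eq_right hu.2]
  have hint : Integrable (Function.uncurry fun u v => (Ici v).indicator (fun _ => f v) u)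
      ((volume.restrict (Ioc a r)).prod (volume.restrict (Ioc b r))) := by
    refine (((integrable_const (1 : ℝ)).mul_prod hf).indicator
      (measurableSet_le measurable_snd measurable_fst)).congr (.of_forall fun p => ?_)
    simp [indicator_apply, Function.uncurry]
  rw [intervalIntegral.integral_of_le har, setIntegral_congr_fun measurableSet_Ioc inner,
    integral_integral_swap hint]
  refine setIntegral_congr_fun measurableSet_Ioc fun v _ => ?_
  rw [← intervalIntegral.integral_of_le har, integral_indicator_Ici_const har]

lemma setIntegral_Ici_tent_mul {f : ℝ → ℝ} {b a r : ℝ} (hba : b ≤ a) (har : a ≤ r)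
    (hf : IntegrableOn f (Ici b)) :
    ∫ v in Ici b, tent a r v * f v = ∫ u in a..r, ∫ v in b..u, f v := by
  rw [integral_primitive_eq_setIntegral_tent_mul hba har
      (hf.mono_set (Ioc_subset_Icc_self.trans Icc_subset_Ici_self)),
    ← integral_Icc_eq_integral_Ioc]
  refine setIntegral_eq_of_subset_of_forall_sdiff_eq_zero measurableSet_Ici Icc_subset_Ici_self
    fun v hv => ?_
  rw [tent_of_le (not_le.1 fun h => hv.2 ⟨hv.1, h⟩).le, zero_mul]

lemma slope_le_slope_outer {f : ℝ → ℝ} {x y z : ℝ} (hxy : x < y) (hyz : y < z)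
    (h : slope f x y ≤ slope f y z) : slope f x y ≤ slope f x z := by
  rw [← lineMap_slope_slope_sub_div_sub f x y z (hxy.trans hyz).ne,
    left_le_lineMap_iff_le (div_pos (by linarith) (by linarith))]
  exact h

lemma slope_outer_le_slope {f : ℝ → ℝ} {x y z : ℝ} (hxy : x < y) (hyz : y < z)
    (h : slope f x y ≤ slope f y z) : slope f x z ≤ slope f y z := by
  rw [← lineMap_slope_slope_sub_div_sub f x y z (hxy.trans hyz).ne,
    lineMap_le_right_iff_le ((div_lt_one (by linarith)).2 (by linarith))]
  exact h

theorem convexOn_of_convexOn_Iic_of_convexOn_Ici_s14 {s : Set ℝ} {f : ℝ → ℝ} {a : ℝ}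
    (hs : Convex ℝ s) (hl : ConvexOn ℝ (s ∩ Iic a) f) (hr : ConvexOn ℝ (s ∩ Ici a) f)
    (hcross : ∀ p ∈ s, ∀ q ∈ s, p < a → a < q → slope f p a ≤ slope f a q) :
    ConvexOn ℝ s f := by
  refine convexOn_of_slope_mono_adjacent hs fun {x y z} hx hz hxy hyz => ?_
  simp only [← slope_def_field]
  rcases le_or_gt z a with hza | haz
  · simpa only [slope_def_field] using
      hl.slope_mono_adjacent ⟨hx, (hxy.trans hyz).le.trans hza⟩ ⟨hz, hza⟩ hxy hyz
  rcases le_or_gt a x with hax | hxa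
  · simpa only [slope_def_field] using
      hr.slope_mono_adjacent ⟨hx, hax⟩ ⟨hz, hax.trans (hxy.trans hyz).le⟩ hxy hyz
  have ha : a ∈ s := hs.ordConnected.out hx hz ⟨hxa.le, haz.le⟩
  rcases lt_trichotomy y a with hya | rfl | hay
  · have hy : y ∈ s := hs.ordConnected.out hx ha ⟨hxy.le, hya.le⟩
    calc slope f x y ≤ slope f y a := by
          simpa only [slope_def_field] using
            hl.slope_mono_adjacent ⟨hx, hxa.le⟩ ⟨ha, self_mem_Iic⟩ hxy hya
      _ ≤ slope f y z := slope_le_slope_outer hya haz (hcross y hy z hz hya haz)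
  · exact hcross x hx z hz hxy hyz
  · have hy : y ∈ s := hs.ordConnected.out ha hz ⟨hay.le, hyz.le⟩
    calc slope f x y ≤ slope f a y := slope_outer_le_slope hxa hay (hcross x hx y hy hxa hay)
      _ ≤ slope f y z := by
          simpa only [slope_def_field] using
            hr.slope_mono_adjacent ⟨ha, self_mem_Ici⟩ ⟨hz, haz.le⟩ hay hyz

theorem ConvexOn.sub_mul_posPart_sub {s : Set ℝ} {f : ℝ → ℝ} {a ε : ℝ}
    (hf : ConvexOn ℝ s f)
    (hkink : ∀ p ∈ s, ∀ q ∈ s, p < a → a < q → slope f p a + ε ≤ slope f a q) :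
    ConvexOn ℝ s (fun u => f u - ε * max (a - u) 0) := by
  have hleft : EqOn (fun u => f u + ε * u + -(ε * a)) (fun u => f u - ε * max (a - u) 0)
      (s ∩ Iic a) := fun u hu => by
    simp only [max_eq_left (sub_nonneg.2 (mem_Iic.1 hu.2))]; ring
  have hright : EqOn f (fun u => f u - ε * max (a - u) 0) (s ∩ Ici a) := fun u hu => by
    simp [max_eq_right (sub_nonpos.2 (mem_Ici.1 hu.2))]
  refine convexOn_of_convexOn_Iic_of_convexOn_Ici_s14 (a := a) hf.1 ?_ ?_
    fun p hp q hq hpa haq => ?_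
  · exact (((hf.subset inter_subset_left (hf.1.inter (convex_Iic a))).add
      ((ε • LinearMap.id : ℝ →ₗ[ℝ] ℝ).convexOn (hf.1.inter (convex_Iic a)))).add_const
      (-(ε * a))).congr hleft
  · exact (hf.subset inter_subset_left (hf.1.inter (convex_Ici a))).congr hright
  · have hslope := hkink p hp q hq hpa haq
    simp only [slope_def_field, max_eq_left (sub_nonneg.2 hpa.le),
      max_eq_right (sub_nonpos.2 haq.le), sub_self, max_self, mul_zero, sub_zero] at hslope ⊢
    have hap : a - p ≠ 0 := (sub_pos.2 hpa).ne'
    calc (f a - (f p - ε * (a - p))) / (a - p) = (f a - f p) / (a - p) + ε := by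
          field_simp; ring
      _ ≤ (f q - f a) / (q - a) := hslope

theorem ConvexOn.add_mul_tent {s : Set ℝ} {f : ℝ → ℝ} {a r ε : ℝ} (hf : ConvexOn ℝ s f)
    (har : a ≤ r) (hε : 0 ≤ ε)
    (hkink : ∀ p ∈ s, ∀ q ∈ s, p < a → a < q → slope f p a + ε ≤ slope f a q) :
    ConvexOn ℝ s (fun u => f u + ε * tent a r u) := by
  have hramp : ConvexOn ℝ s fun u => max (r - u) 0 :=
    ((convexOn_const r hf.1).sub (concaveOn_id hf.1)).sup (convexOn_const 0 hf.1)
  refine ((hf.sub_mul_posPart_sub hkink).add (hramp.smul hε)).congr fun u _ => ?_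
  simp only [Pi.add_apply, smul_eq_mul, tent_eq_sub har]
  ring

lemma ConvexOn.slope_add_le_slope_of_hasDerivWithinAt {s : Set ℝ} {f : ℝ → ℝ}
    {a d₁ d₂ p q : ℝ} (hf : ConvexOn ℝ s f) (h₁ : HasDerivWithinAt f d₁ (Iic a) a)
    (h₂ : HasDerivWithinAt f d₂ (Ici a) a) (hp : p ∈ s) (hq : q ∈ s) (hpa : p < a)
    (haq : a < q) : slope f p a + (d₂ - d₁) ≤ slope f a q := by
  have ha : a ∈ s := hf.1.ordConnected.out hp hq ⟨hpa.le, haq.le⟩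
  have := hf.slope_le_of_hasDerivWithinAt_Iio hp ha hpa (h₁.mono Iio_subset_Iic_self)
  have := hf.le_slope_of_hasDerivWithinAt_Ioi ha hq haq (h₂.mono Ioi_subset_Ici_self)
  linarith

lemma hasDerivWithinAt_of_eqOn_affine {f : ℝ → ℝ} {s t : Set ℝ} {a α β : ℝ}
    (hs : s ∈ 𝓝[t] a) (ha : a ∈ s) (h : ∀ y ∈ s, f y = α * y + β) :
    HasDerivWithinAt f α t a :=
  (((hasDerivAt_id a).const_mul α).add_const β).hasDerivWithinAt.congr_of_eventuallyEq
    (eventually_of_mem hs h) (h a ha) |>.congr_deriv (mul_one α)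

lemma ConvexOn.exists_slope_add_le_slope {s : Set ℝ} {f : ℝ → ℝ} {c a d : ℝ}
    (hf : ConvexOn ℝ s f) (hca : c < a) (had : a < d)
    (h₁ : ∃ α β : ℝ, ∀ y ∈ Icc c a, f y = α * y + β)
    (h₂ : ∃ α β : ℝ, ∀ y ∈ Icc a d, f y = α * y + β)
    (hkink : derivWithin f (Iic a) a < derivWithin f (Ici a) a) :
    ∃ δ > 0, ∀ p ∈ s, ∀ q ∈ s, p < a → a < q → slope f p a + δ ≤ slope f a q := by
  obtain ⟨α₁, β₁, h₁⟩ := h₁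
  obtain ⟨α₂, β₂, h₂⟩ := h₂
  have hd₁ := hasDerivWithinAt_of_eqOn_affine (Icc_mem_nhdsLE hca) ⟨hca.le, le_rfl⟩ h₁
  have hd₂ := hasDerivWithinAt_of_eqOn_affine (Icc_mem_nhdsGE had) ⟨le_rfl, had.le⟩ h₂
  rw [hd₁.derivWithin (uniqueDiffOn_Iic _ _ self_mem_Iic),
    hd₂.derivWithin (uniqueDiffOn_Ici _ _ self_mem_Ici)] at hkink
  exact ⟨α₂ - α₁, sub_pos.2 hkink, fun p hp q hq hpa haq =>
    hf.slope_add_le_slope_of_hasDerivWithinAt hd₁ hd₂ hp hq hpa haq⟩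

lemma integrableOn_add_mul_sq {s : Set ℝ} {f g : ℝ → ℝ}
    (hf2 : IntegrableOn (fun y => f y ^ 2) s) (hgf : IntegrableOn (fun y => g y * f y) s)
    (hg2 : IntegrableOn (fun y => g y ^ 2) s) (ε : ℝ) :
    IntegrableOn (fun y => (f y + ε * g y) ^ 2) s := by
  have := (hf2.add (hgf.const_mul (2 * ε))).add (hg2.const_mul (ε ^ 2))
  exact this.congr (ae_of_all _ fun y => by simp only [Pi.add_apply]; ring)

lemma integral_add_mul_sq {s : Set ℝ} {f g : ℝ → ℝ}
    (hf2 : IntegrableOn (fun y => f y ^ 2) s) (hgf : IntegrableOn (fun y => g y * f y) s)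
    (hg2 : IntegrableOn (fun y => g y ^ 2) s) (ε : ℝ) :
    ∫ y in s, (f y + ε * g y) ^ 2 =
      (∫ y in s, f y ^ 2) + 2 * ε * (∫ y in s, g y * f y) + ε ^ 2 * ∫ y in s, g y ^ 2 := by
  have hexp : ∀ y, (f y + ε * g y) ^ 2 = f y ^ 2 + 2 * ε * (g y * f y) + ε ^ 2 * g y ^ 2 :=
    fun y => by ring
  simp_rw [hexp]
  have h12 : IntegrableOn (fun y => f y ^ 2 + 2 * ε * (g y * f y)) s :=
    hf2.add (hgf.const_mul _)
  rw [integral_add h12 (hg2.const_mul _), integral_add hf2 (hgf.const_mul _),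
    integral_const_mul, integral_const_mul]

theorem inv_mul_sum_le_integral_mul_of_forall_le {s : Set ℝ} {f g : ℝ → ℝ} {n : ℕ}
    {x : Fin n → ℝ} {δ : ℝ}
    (hf2 : IntegrableOn (fun y => f y ^ 2) s) (hgf : IntegrableOn (fun y => g y * f y) s)
    (hg2 : IntegrableOn (fun y => g y ^ 2) s) (hδ : 0 < δ)
    (hmin : ∀ ε, 0 < ε → ε ≤ δ →
      (∫ y in s, f y ^ 2) - (2 / n) * ∑ i, f (x i) ≤
        (∫ y in s, (f y + ε * g y) ^ 2) - (2 / n) * ∑ i, (f (x i) + ε * g (x i))) :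
    (n : ℝ)⁻¹ * ∑ i, g (x i) ≤ ∫ y in s, g y * f y := by
  set D := (∫ y in s, g y * f y) - (n : ℝ)⁻¹ * ∑ i, g (x i)
  set C := ∫ y in s, g y ^ 2
  have hlin : ∀ ε, 0 < ε → ε ≤ δ → 0 ≤ 2 * D + ε * C := by
    intro ε hε hεδ
    have h := hmin ε hε hεδ
    rw [integral_add_mul_sq hf2 hgf hg2, Finset.sum_add_distrib, ← Finset.mul_sum] at h
    refine (mul_nonneg_iff_of_pos_left hε).1 ?_
    have hexpand : ε * (2 * D + ε * C) = 2 * ε * (∫ y in s, g y * f y) + ε ^ 2 * C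
        - 2 / n * (ε * ∑ i, g (x i)) := by
      simp only [D]; ring
    linarith
  have hlim : Tendsto (fun ε => 2 * D + ε * C) (𝓝[>] 0) (𝓝 (2 * D)) := by
    have hc : Continuous fun ε : ℝ => 2 * D + ε * C := by fun_prop
    simpa using (hc.tendsto 0).mono_left nhdsWithin_le_nhds
  have h2D := ge_of_tendsto hlim
    (eventually_of_mem (Ioc_mem_nhdsGT hδ) fun ε hε => hlin ε hε.1 hε.2)
  linarith

theorem lse_forward_integral_inequality_general
    (n : ℕ) (x : Fin n → ℝ)
    (EDF : ℝ → ℝ)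
    (hEDF : ∀ r : ℝ, EDF r = (n : ℝ)⁻¹ * (Finset.univ.filter fun i => x i ≤ r).card)
    (fhat : ℝ → ℝ)
    (hfconv : ConvexOn ℝ (Ici 0) fhat) (hfint : IntegrableOn fhat (Ici 0))
    (hfsq : IntegrableOn (fun y => fhat y ^ 2) (Ici 0))
    (hopt : ∀ h : ℝ → ℝ, ConvexOn ℝ (Ici 0) h → IntegrableOn h (Ici 0) →
      IntegrableOn (fun y => h y ^ 2) (Ici 0) →
      (∫ y in Ici (0 : ℝ), fhat y ^ 2) - (2 / n) * ∑ i, fhat (x i) ≤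
        (∫ y in Ici (0 : ℝ), h y ^ 2) - (2 / n) * ∑ i, h (x i))
    (m : ℕ) (t : ℕ → ℝ)
    (ht0 : t 0 = 0) (htlt : ∀ k, k < m → t k < t (k + 1))
    (haff : ∀ k, 1 ≤ k → k ≤ m → ∃ α β : ℝ,
      ∀ y ∈ Icc (t (k - 1)) (t k), fhat y = α * y + β)
    (hkink : ∀ k, 1 ≤ k → k ≤ m →
      derivWithin fhat (Iic (t k)) (t k) < derivWithin fhat (Ici (t k)) (t k)) :
    ∀ k, k < m → ∀ r ∈ Ioc (t k) (t (k + 1)),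
      ∫ u in (t k)..r, EDF u ≤ ∫ u in (t k)..r, (∫ v in (0 : ℝ)..u, fhat v) := by
  rintro k hk r ⟨har, -⟩
  have ha : 0 ≤ t k := by
    have : ∀ j ≤ k, 0 ≤ t j := fun j hj => by
      induction j with
      | zero => exact ht0.ge
      | succ j ih => exact (ih (by omega)).trans (htlt j (by omega)).le
    exact this k le_rfl
  obtain ⟨δ, hδ, hgap⟩ : ∃ δ > 0, ∀ p ∈ Ici (0 : ℝ), ∀ q ∈ Ici (0 : ℝ), p < t k → t k < q →
      slope fhat p (t k) + δ ≤ slope fhat (t k) q := by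
    rcases Nat.eq_zero_or_pos k with rfl | hk1
    · exact ⟨1, one_pos, fun p hp _ _ hpa _ => absurd hp (not_le.2 (ht0 ▸ hpa))⟩
    have hprev : t (k - 1) < t k := by simpa [Nat.sub_add_cancel hk1] using htlt (k - 1) (by omega)
    exact hfconv.exists_slope_add_le_slope hprev (htlt k hk) (haff k hk1 hk.le) (haff (k + 1)
      (by omega) hk) (hkink k hk1 hk.le)
  have hgf := integrableOn_tent_mul (t k) r hfint
  have hg2 : IntegrableOn (fun y => tent (t k) r y ^ 2) (Ici 0) := by
    simpa only [sq] using integrableOn_tent_mul (t k) r (integrableOn_tent_Ici (t k) r 0)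
  have hfoc := inv_mul_sum_le_integral_mul_of_forall_le (x := x) hfsq hgf hg2 hδ
    fun ε hε hεδ => hopt _
      (hfconv.add_mul_tent har.le hε.le fun p hp q hq hpa haq => by
        linarith [hgap p hp q hq hpa haq])
      (hfint.add ((integrableOn_tent_Ici _ _ _).const_mul ε))
      (integrableOn_add_mul_sq hfsq hgf hg2 ε)
  simp_rw [hEDF]
  rw [intervalIntegral.integral_const_mul, integral_card_filter_le x har.le,
    ← setIntegral_Ici_tent_mul ha har.le hfint]
  exact hfoc

/-- Forward integral inequality for the least squares estimator:
`∫_{t_k}^r 𝔽 ≤ ∫_{t_k}^r F̂` for all `r ∈ (t_k, t_{k+1}]`, where `F̂(u) = ∫_0^u f̂`. -/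
theorem lse_forward_integral_inequality
    (n : ℕ) (hn : 1 ≤ n) (x : Fin n → ℝ) (hx : ∀ i, 0 < x i)
    (EDF : ℝ → ℝ)
    (hEDF : ∀ r : ℝ, EDF r = (n : ℝ)⁻¹ * (Finset.univ.filter fun i => x i ≤ r).card)
    (fhat : ℝ → ℝ)
    (hfconv : ConvexOn ℝ (Ici 0) fhat) (hfint : IntegrableOn fhat (Ici 0))
    (hfsq : IntegrableOn (fun y => fhat y ^ 2) (Ici 0))
    (hopt : ∀ h : ℝ → ℝ, ConvexOn ℝ (Ici 0) h → IntegrableOn h (Ici 0) →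
      IntegrableOn (fun y => h y ^ 2) (Ici 0) →
      (∫ y in Ici (0 : ℝ), fhat y ^ 2) - (2 / n) * ∑ i, fhat (x i) ≤
        (∫ y in Ici (0 : ℝ), h y ^ 2) - (2 / n) * ∑ i, h (x i))
    (m : ℕ) (t : ℕ → ℝ)
    (ht0 : t 0 = 0) (htlt : ∀ k, k < m → t k < t (k + 1))
    (htmax : ∀ i, x i < t m)
    (haff : ∀ k, 1 ≤ k → k ≤ m → ∃ α β : ℝ,
      ∀ y ∈ Icc (t (k - 1)) (t k), fhat y = α * y + β)
    (htail : ∀ y, t m ≤ y → fhat y = 0)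
    (hkink : ∀ k, 1 ≤ k → k ≤ m →
      derivWithin fhat (Iic (t k)) (t k) < derivWithin fhat (Ici (t k)) (t k)) :
    ∀ k, k < m → ∀ r ∈ Ioc (t k) (t (k + 1)),
      ∫ u in (t k)..r, EDF u ≤ ∫ u in (t k)..r, (∫ v in (0 : ℝ)..u, fhat v) :=
  lse_forward_integral_inequality_general n x EDF hEDF fhat hfconv hfint hfsq hopt m t ht0 htlt haff
    hkink
end
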